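/- arXiv:1607.00975 — 6 statements merged into one kernel-verified Lean document; each statement's English description precedes it below -/
import Mathlib

section
/- Let H be a real Hilbert space and A : H → H a continuous self-adjoint linear operator that is positive (⟪x, A x⟫ ≥ 0 for all x) and invertible with continuous inverse A⁻¹. If Φ : ℝ → H is twice differentiable with Φ''(t) = −A(Φ(t)) for all t, then the quantity t ↦ ‖Φ(t)‖² + ⟪Φ'(t), A⁻¹(Φ'(t))⟫ is constant in t; consequently ‖Φ(t)‖² ≤ ‖Φ(0)‖² + ⟪Φ'(0), A⁻¹(Φ'(0))⟫ for all t ∈ ℝ. -/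
/-!
Differentiating, `d/dt ‖Φ‖² = 2⟪Φ, Φ'⟫` and, since `B = A⁻¹` is symmetric,
`d/dt ⟪Φ', B Φ'⟫ = 2⟪Φ'', B Φ'⟫ = -2⟪A Φ, B Φ'⟫ = -2⟪Φ, Φ'⟫`, so the energy is constant.
Positivity of `A` makes `⟪Φ', B Φ'⟫ = ⟪A (B Φ'), B Φ'⟫` nonnegative, which gives the bound.
-/

open scoped InnerProductSpace

section

variable {H : Type*} [NormedAddCommGroup H] [InnerProductSpace ℝ H]

theorem LinearMap.IsSymmetric.of_rightInverse {A B : H →ₗ[ℝ] H} (hA : A.IsSymmetric)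
    (hAB : ∀ x, A (B x) = x) : B.IsSymmetric := fun x y =>
  calc ⟪B x, y⟫_ℝ = ⟪B x, A (B y)⟫_ℝ := by rw [hAB]
    _ = ⟪x, B y⟫_ℝ := by rw [← hA, hAB]

theorem inner_rightInverse_self_nonneg {A B : H → H} (hpos : ∀ x, 0 ≤ ⟪x, A x⟫_ℝ)
    (hAB : ∀ x, A (B x) = x) (x : H) : 0 ≤ ⟪x, B x⟫_ℝ := by
  simpa only [hAB, real_inner_comm x] using hpos (B x)

theorem HasDerivAt.inner_map_self {B : H →L[ℝ] H} (hB : (B : H →ₗ[ℝ] H).IsSymmetric)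
    {u : ℝ → H} {u' : H} {t : ℝ} (hu : HasDerivAt u u' t) :
    HasDerivAt (fun s => ⟪u s, B (u s)⟫_ℝ) (2 * ⟪u', B (u t)⟫_ℝ) t := by
  refine (hu.inner ℝ (B.hasFDerivAt.comp_hasDerivAt t hu)).congr_deriv ?_
  have hswap : ⟪u t, B u'⟫_ℝ = ⟪u', B (u t)⟫_ℝ := by
    rw [real_inner_comm]; exact hB u' (u t)
  rw [Function.comp_apply, hswap]
  ring

theorem wave_energy_eq {A B : H →L[ℝ] H} (hA : (A : H →ₗ[ℝ] H).IsSymmetric)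
    (hAB : ∀ x, A (B x) = x) {Φ Φ' Φ'' : ℝ → H} (hΦ : ∀ t, HasDerivAt Φ (Φ' t) t)
    (hΦ' : ∀ t, HasDerivAt Φ' (Φ'' t) t) (hwave : ∀ t, Φ'' t = -(A (Φ t))) (t s : ℝ) :
    ‖Φ t‖ ^ 2 + ⟪Φ' t, B (Φ' t)⟫_ℝ = ‖Φ s‖ ^ 2 + ⟪Φ' s, B (Φ' s)⟫_ℝ := by
  have hB := hA.of_rightInverse (B := B) hAB
  have hE : ∀ t, HasDerivAt (fun t => ‖Φ t‖ ^ 2 + ⟪Φ' t, B (Φ' t)⟫_ℝ) 0 t := fun t => by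
    refine ((hΦ t).norm_sq.add ((hΦ' t).inner_map_self hB)).congr_deriv ?_
    have hsym : ⟪A (Φ t), B (Φ' t)⟫_ℝ = ⟪Φ t, Φ' t⟫_ℝ := (hA _ _).trans (congrArg _ (hAB _))
    rw [hwave, inner_neg_left, hsym]
    ring
  exact is_const_of_deriv_eq_zero (fun t => (hE t).differentiableAt) (fun t => (hE t).deriv) t s

end

theorem stmt_1_general {H : Type*} [NormedAddCommGroup H] [InnerProductSpace ℝ H]
    (A B : H →L[ℝ] H) (hA : ∀ x y : H, ⟪A x, y⟫_ℝ = ⟪x, A y⟫_ℝ)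
    (hpos : ∀ x : H, 0 ≤ ⟪x, A x⟫_ℝ)
    (hAB : ∀ x : H, A (B x) = x)
    (Φ Φ' Φ'' : ℝ → H)
    (hΦ : ∀ t, HasDerivAt Φ (Φ' t) t)
    (hΦ' : ∀ t, HasDerivAt Φ' (Φ'' t) t)
    (hwave : ∀ t, Φ'' t = -(A (Φ t))) :
    (∀ t s : ℝ, ‖Φ t‖ ^ 2 + ⟪Φ' t, B (Φ' t)⟫_ℝ = ‖Φ s‖ ^ 2 + ⟪Φ' s, B (Φ' s)⟫_ℝ) ∧
      (∀ t : ℝ, ‖Φ t‖ ^ 2 ≤ ‖Φ 0‖ ^ 2 + ⟪Φ' 0, B (Φ' 0)⟫_ℝ) := by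
  have hconst := wave_energy_eq hA hAB hΦ hΦ' hwave
  refine ⟨hconst, fun t => ?_⟩
  calc ‖Φ t‖ ^ 2
      ≤ ‖Φ t‖ ^ 2 + ⟪Φ' t, B (Φ' t)⟫_ℝ :=
        le_add_of_nonneg_right (inner_rightInverse_self_nonneg hpos hAB _)
    _ = ‖Φ 0‖ ^ 2 + ⟪Φ' 0, B (Φ' 0)⟫_ℝ := hconst t 0

/-- For the abstract wave equation `Φ'' = -A Φ` with `A` a continuous, self-adjoint,
positive, boundedly invertible operator on a real Hilbert space, the quantity
`t ↦ ‖Φ(t)‖² + ⟪Φ'(t), A⁻¹(Φ'(t))⟫` is conserved; consequently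
`‖Φ(t)‖² ≤ ‖Φ(0)‖² + ⟪Φ'(0), A⁻¹(Φ'(0))⟫` for all `t`. -/
theorem stmt_1 {H : Type*} [NormedAddCommGroup H] [InnerProductSpace ℝ H] [CompleteSpace H]
    (A B : H →L[ℝ] H) (hA : ∀ x y : H, ⟪A x, y⟫_ℝ = ⟪x, A y⟫_ℝ)
    (hpos : ∀ x : H, 0 ≤ ⟪x, A x⟫_ℝ)
    (hBA : ∀ x : H, B (A x) = x) (hAB : ∀ x : H, A (B x) = x)
    (Φ Φ' Φ'' : ℝ → H)
    (hΦ : ∀ t, HasDerivAt Φ (Φ' t) t)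
    (hΦ' : ∀ t, HasDerivAt Φ' (Φ'' t) t)
    (hwave : ∀ t, Φ'' t = -(A (Φ t))) :
    (∀ t s : ℝ, ‖Φ t‖ ^ 2 + ⟪Φ' t, B (Φ' t)⟫_ℝ = ‖Φ s‖ ^ 2 + ⟪Φ' s, B (Φ' s)⟫_ℝ) ∧
      (∀ t : ℝ, ‖Φ t‖ ^ 2 ≤ ‖Φ 0‖ ^ 2 + ⟪Φ' 0, B (Φ' 0)⟫_ℝ) :=
  stmt_1_general A B hA hpos hAB Φ Φ' Φ'' hΦ hΦ' hwave
end

section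
/- Fix real numbers M > 0, Q ≠ 0, Λ, an integer ℓ ≥ 2, and set λ = ℓ(ℓ+1), ξ = √(9M² + 4Q²(λ−2)), f(r) = 1 − 2M/r + Q²/r² − Λr²/3. Let I ⊆ (0,∞) be an open interval on which f ≠ 0, and let ψ₁, ψ₂ : ℝ × I → ℝ be smooth. Define W(t,r) = ((3M+ξ)ψ₁(t,r) − Q(λ−2)ψ₂(t,r))/r and Φ(t,r) = (4Q ψ₁(t,r) + (3M+ξ)ψ₂(t,r))/r. Then the following are equivalent: (i) for n = 1, 2 and all (t,r) ∈ ℝ × I, −f(r)⁻¹ ∂_t²ψ_n + ∂_r(f ∂_r ψ_n) = U_n(r) ψ_n, where U_n(r) = λ/r² + 4Q²/r⁴ − (3M + (−1)ⁿ ξ)/r³; (ii) for all (t,r) ∈ ℝ × I, −f(r)⁻¹ ∂_t²Φ + ∂_r(f ∂_r Φ) + (2f/r) ∂_r Φ + (8M/r³ − 6Q²/r⁴ − 2Λ/3 − λ/r²) Φ = (4Q/r³) W, and −f(r)⁻¹ ∂_t²W + ∂_r(f ∂_r W) + (2f/r) ∂_r W + (2M/r³ − 6Q²/r⁴ − 2Λ/3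 − λ/r²) W = (Q(λ−2)/r³) Φ. -/
lemma smooth_partials (I : Set ℝ) (hIopen : IsOpen I)
    (ψ : ℝ → ℝ → ℝ)
    (hψ : ContDiffOn ℝ (⊤ : ℕ∞) (fun p : ℝ × ℝ => ψ p.1 p.2) (Set.univ ×ˢ I)) :
    ∃ pt ptt pr prr : ℝ → ℝ → ℝ,
      (∀ r ∈ I, ∀ s, HasDerivAt (fun s' => ψ s' r) (pt s r) s) ∧
      (∀ r ∈ I, ∀ t, HasDerivAt (fun s => pt s r) (ptt t r) t) ∧
      (∀ t, ∀ x ∈ I, HasDerivAt (fun y => ψ t y) (pr t x) x) ∧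
      (∀ t, ∀ x ∈ I, HasDerivAt (fun y => pr t y) (prr t x) x) := by
  set U : Set (ℝ × ℝ) := Set.univ ×ˢ I with hUdef
  have hU : IsOpen U := isOpen_univ.prod hIopen
  have hmem : ∀ (t r : ℝ), r ∈ I → (t, r) ∈ U := fun t r hr => ⟨trivial, hr⟩
  have lineT : ∀ (G : ℝ × ℝ → ℝ), ContDiffOn ℝ (⊤ : ℕ∞) G U → ∀ (t r : ℝ), r ∈ I →
      HasDerivAt (fun s => G (s, r)) (fderiv ℝ G (t, r) (1, 0)) t := by
    intro G hG t r hr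
    have hd : DifferentiableAt ℝ G (t, r) :=
      (hG.contDiffAt (hU.mem_nhds (hmem t r hr))).differentiableAt (by simp)
    have hline : HasDerivAt (fun s : ℝ => (s, r)) ((1 : ℝ), (0 : ℝ)) t :=
      (hasDerivAt_id t).prodMk (hasDerivAt_const t r)
    exact hd.hasFDerivAt.comp_hasDerivAt t hline
  have lineR : ∀ (G : ℝ × ℝ → ℝ), ContDiffOn ℝ (⊤ : ℕ∞) G U → ∀ (t r : ℝ), r ∈ I →
      HasDerivAt (fun y => G (t, y)) (fderiv ℝ G (t, r) (0, 1)) r := by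
    intro G hG t r hr
    have hd : DifferentiableAt ℝ G (t, r) :=
      (hG.contDiffAt (hU.mem_nhds (hmem t r hr))).differentiableAt (by simp)
    have hline : HasDerivAt (fun y : ℝ => (t, y)) ((0 : ℝ), (1 : ℝ)) r :=
      (hasDerivAt_const r t).prodMk (hasDerivAt_id r)
    exact hd.hasFDerivAt.comp_hasDerivAt r hline
  set F : ℝ × ℝ → ℝ := fun p => ψ p.1 p.2 with hF
  have hFd : ContDiffOn ℝ (⊤ : ℕ∞) (fderiv ℝ F) U := hψ.fderiv_of_isOpen hU (by simp)
  have happ : ∀ v : ℝ × ℝ, ContDiffOn ℝ (⊤ : ℕ∞) (fun p => fderiv ℝ F p v) U := by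
    intro v
    exact (ContinuousLinearMap.apply ℝ ℝ v).contDiff.comp_contDiffOn hFd
  refine ⟨fun s r => fderiv ℝ F (s, r) (1, 0),
          fun t r => fderiv ℝ (fun p => fderiv ℝ F p (1, 0)) (t, r) (1, 0),
          fun t x => fderiv ℝ F (t, x) (0, 1),
          fun t x => fderiv ℝ (fun p => fderiv ℝ F p (0, 1)) (t, x) (0, 1),
          ?_, ?_, ?_, ?_⟩
  · intro r hr s; exact lineT F hψ s r hr
  · intro r hr t; exact lineT _ (happ (1, 0)) t r hr
  · intro t x hx; exact lineR F hψ t x hx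
  · intro t x hx; exact lineR _ (happ (0, 1)) t x hx


lemma combo_derivs (I : Set ℝ) (hIopen : IsOpen I)
    (ψ₁ ψ₂ p1t p1tt p1r p1rr p2t p2tt p2r p2rr : ℝ → ℝ → ℝ)
    (h1t : ∀ r ∈ I, ∀ s, HasDerivAt (fun s' => ψ₁ s' r) (p1t s r) s)
    (h1tt : ∀ r ∈ I, ∀ t', HasDerivAt (fun s => p1t s r) (p1tt t' r) t')
    (h1r : ∀ t', ∀ x ∈ I, HasDerivAt (fun y => ψ₁ t' y) (p1r t' x) x)
    (h1rr : ∀ t', ∀ x ∈ I, HasDerivAt (fun y => p1r t' y) (p1rr t' x) x)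
    (h2t : ∀ r ∈ I, ∀ s, HasDerivAt (fun s' => ψ₂ s' r) (p2t s r) s)
    (h2tt : ∀ r ∈ I, ∀ t', HasDerivAt (fun s => p2t s r) (p2tt t' r) t')
    (h2r : ∀ t', ∀ x ∈ I, HasDerivAt (fun y => ψ₂ t' y) (p2r t' x) x)
    (h2rr : ∀ t', ∀ x ∈ I, HasDerivAt (fun y => p2r t' y) (p2rr t' x) x)
    (hI0 : ∀ x ∈ I, x ≠ 0)
    (α β : ℝ) (Θ : ℝ → ℝ → ℝ)
    (hΘ : ∀ t' r', Θ t' r' = (α * ψ₁ t' r' + β * ψ₂ t' r') / r')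
    (f : ℝ → ℝ) (fr : ℝ) (t r : ℝ) (hr : r ∈ I)
    (hfr : HasDerivAt f fr r) :
    deriv (fun s => deriv (fun s' => Θ s' r) s) t = (α * p1tt t r + β * p2tt t r) / r ∧
    deriv (fun y => Θ t y) r
      = (α * p1r t r + β * p2r t r) / r - (α * ψ₁ t r + β * ψ₂ t r) / r ^ 2 ∧
    deriv (fun x => f x * deriv (fun y => Θ t y) x) r
      = fr * ((α * p1r t r + β * p2r t r) / r - (α * ψ₁ t r + β * ψ₂ t r) / r ^ 2)
        + f r * ((α * p1rr t r + β * p2rr t r) / r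
            - 2 * (α * p1r t r + β * p2r t r) / r ^ 2
            + 2 * (α * ψ₁ t r + β * ψ₂ t r) / r ^ 3) := by
  have hr0 := hI0 r hr
  have dT : ∀ s, deriv (fun s' => Θ s' r) s = (α * p1t s r + β * p2t s r) / r := by
    intro s
    have e0 : (fun s' => Θ s' r) = fun s' => (α * ψ₁ s' r + β * ψ₂ s' r) / r :=
      funext fun s' => hΘ s' r
    rw [e0]
    exact ((((h1t r hr s).const_mul α).add ((h2t r hr s).const_mul β)).div_const r).deriv
  have dR : ∀ x ∈ I, HasDerivAt (fun y => Θ t y)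
      ((α * p1r t x + β * p2r t x) / x - (α * ψ₁ t x + β * ψ₂ t x) / x ^ 2) x := by
    intro x hx
    have hx0 := hI0 x hx
    have hnum : HasDerivAt (fun y => α * ψ₁ t y + β * ψ₂ t y) (α * p1r t x + β * p2r t x) x :=
      ((h1r t x hx).const_mul α).add ((h2r t x hx).const_mul β)
    have hdiv := hnum.div (hasDerivAt_id x) hx0
    have hfun : (fun y => Θ t y) = fun y => (α * ψ₁ t y + β * ψ₂ t y) / y :=
      funext fun y => hΘ t y
    rw [hfun]
    refine hdiv.congr_deriv ?_
    simp only [id]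
    field_simp
  refine ⟨?_, (dR r hr).deriv, ?_⟩
  · rw [funext dT]
    exact ((((h1tt r hr t).const_mul α).add ((h2tt r hr t).const_mul β)).div_const r).deriv
  · have ev : (fun x => f x * deriv (fun y => Θ t y) x) =ᶠ[nhds r]
        (fun x => f x * ((α * p1r t x + β * p2r t x) / x
          - (α * ψ₁ t x + β * ψ₂ t x) / x ^ 2)) := by
      filter_upwards [hIopen.mem_nhds hr] with x hx
      rw [(dR x hx).deriv]
    rw [ev.deriv_eq]
    have hg : HasDerivAt (fun x => (α * p1r t x + β * p2r t x) / x
        - (α * ψ₁ t x + β * ψ₂ t x) / x ^ 2)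
        ((α * p1rr t r + β * p2rr t r) / r - 2 * (α * p1r t r + β * p2r t r) / r ^ 2
          + 2 * (α * ψ₁ t r + β * ψ₂ t r) / r ^ 3) r := by
      have h1 := ((((h1rr t r hr).const_mul α).add ((h2rr t r hr).const_mul β)).div
        (hasDerivAt_id r) hr0)
      have h2 := ((((h1r t r hr).const_mul α).add ((h2r t r hr).const_mul β)).div
        (hasDerivAt_pow 2 r) (pow_ne_zero 2 hr0))
      refine (h1.sub h2).congr_deriv ?_
      simp only [id, Pi.add_apply]
      field_simp
      ring
    exact (hfr.mul hg).deriv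

set_option maxHeartbeats 2000000 in
/-- Zerilli–Moncrief decoupling: for a fixed harmonic number `ℓ ≥ 2` mode with
`λ = ℓ(ℓ+1)` and `ξ = √(9M² + 4Q²(λ−2))`, the coupled system of wave equations for the
gauge-invariant odd potentials `Φ` and `W` of Reissner–Nordström (A)dS perturbations is
equivalent to the two decoupled Regge–Wheeler equations with potentials `U_n`. -/
theorem stmt_5 (M Q Λ : ℝ) (hM : 0 < M) (hQ : Q ≠ 0)
    (ℓ : ℤ) (hℓ : 2 ≤ ℓ) (lam ξ : ℝ)
    (hlam : lam = (ℓ : ℝ) * ((ℓ : ℝ) + 1))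
    (hξ : ξ = Real.sqrt (9 * M ^ 2 + 4 * Q ^ 2 * (lam - 2)))
    (f : ℝ → ℝ) (hf : ∀ r : ℝ, f r = 1 - 2 * M / r + Q ^ 2 / r ^ 2 - Λ * r ^ 2 / 3)
    (I : Set ℝ) (hIopen : IsOpen I) (hIpos : I ⊆ Set.Ioi 0)
    (hfne : ∀ r ∈ I, f r ≠ 0)
    (ψ₁ ψ₂ : ℝ → ℝ → ℝ)
    (hψ₁ : ContDiffOn ℝ (⊤ : ℕ∞) (fun p : ℝ × ℝ => ψ₁ p.1 p.2) (Set.univ ×ˢ I))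
    (hψ₂ : ContDiffOn ℝ (⊤ : ℕ∞) (fun p : ℝ × ℝ => ψ₂ p.1 p.2) (Set.univ ×ˢ I))
    (W Φ : ℝ → ℝ → ℝ)
    (hW : ∀ t r, W t r = ((3 * M + ξ) * ψ₁ t r - Q * (lam - 2) * ψ₂ t r) / r)
    (hΦ : ∀ t r, Φ t r = (4 * Q * ψ₁ t r + (3 * M + ξ) * ψ₂ t r) / r)
    (U : ℕ → ℝ → ℝ)
    (hU : ∀ n r, U n r
      = lam / r ^ 2 + 4 * Q ^ 2 / r ^ 4 - (3 * M + (-1 : ℝ) ^ n * ξ) / r ^ 3) :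
    (∀ n ∈ ({1, 2} : Set ℕ), ∀ t : ℝ, ∀ r ∈ I,
        -(f r)⁻¹ * deriv (fun s => deriv (fun s' => (if n = 1 then ψ₁ else ψ₂) s' r) s) t
          + deriv (fun x => f x * deriv (fun y => (if n = 1 then ψ₁ else ψ₂) t y) x) r
          = U n r * (if n = 1 then ψ₁ else ψ₂) t r)
      ↔ (∀ t : ℝ, ∀ r ∈ I,
        (-(f r)⁻¹ * deriv (fun s => deriv (fun s' => Φ s' r) s) t
            + deriv (fun x => f x * deriv (fun y => Φ t y) x) r
            + (2 * f r / r) * deriv (fun y => Φ t y) r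
            + (8 * M / r ^ 3 - 6 * Q ^ 2 / r ^ 4 - 2 * Λ / 3 - lam / r ^ 2) * Φ t r
          = (4 * Q / r ^ 3) * W t r)
        ∧ (-(f r)⁻¹ * deriv (fun s => deriv (fun s' => W s' r) s) t
            + deriv (fun x => f x * deriv (fun y => W t y) x) r
            + (2 * f r / r) * deriv (fun y => W t y) r
            + (2 * M / r ^ 3 - 6 * Q ^ 2 / r ^ 4 - 2 * Λ / 3 - lam / r ^ 2) * W t r
          = (Q * (lam - 2) / r ^ 3) * Φ t r)) := by
  obtain ⟨p1t, p1tt, p1r, p1rr, h1t, h1tt, h1r, h1rr⟩ := smooth_partials I hIopen ψ₁ hψ₁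
  obtain ⟨p2t, p2tt, p2r, p2rr, h2t, h2tt, h2r, h2rr⟩ := smooth_partials I hIopen ψ₂ hψ₂
  have hI0 : ∀ x ∈ I, x ≠ 0 := fun x hx => ne_of_gt (hIpos hx)
  have hlam6 : 6 ≤ lam := by
    have h2 : (2 : ℝ) ≤ (ℓ : ℝ) := by exact_mod_cast hℓ
    rw [hlam]; nlinarith
  have hξ2 : ξ ^ 2 = 9 * M ^ 2 + 4 * Q ^ 2 * (lam - 2) := by
    rw [hξ]
    exact Real.sq_sqrt (by nlinarith [sq_nonneg Q, sq_nonneg M])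
  have hdet : 0 < 4 * Q ^ 2 * (lam - 2) + (3 * M + ξ) ^ 2 := by
    have hQ2 : 0 < Q ^ 2 := by positivity
    nlinarith [sq_nonneg (3 * M + ξ)]
  have hf' : ∀ x ∈ I, HasDerivAt f (2 * M / x ^ 2 - 2 * Q ^ 2 / x ^ 3 - 2 * Λ * x / 3) x := by
    intro x hx
    have hx0 : x ≠ 0 := hI0 x hx
    have ha := (hasDerivAt_const x (2 * M)).div (hasDerivAt_id x) hx0
    have hb := (hasDerivAt_const x (Q ^ 2)).div (hasDerivAt_pow 2 x) (pow_ne_zero 2 hx0)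
    have hc := ((hasDerivAt_pow 2 x).const_mul Λ).div_const 3
    have h1 := (((hasDerivAt_const x (1 : ℝ)).sub ha).add hb).sub hc
    have hfeq : f = fun y => 1 - 2 * M / y + Q ^ 2 / y ^ 2 - Λ * y ^ 2 / 3 := funext hf
    rw [hfeq]
    refine h1.congr_deriv ?_
    simp only [id]
    field_simp
    ring
  have ttD : ∀ (ψ pt ptt : ℝ → ℝ → ℝ),
      (∀ r ∈ I, ∀ s, HasDerivAt (fun s' => ψ s' r) (pt s r) s) →
      (∀ r ∈ I, ∀ t', HasDerivAt (fun s => pt s r) (ptt t' r) t') →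
      ∀ (t r : ℝ), r ∈ I → deriv (fun s => deriv (fun s' => ψ s' r) s) t = ptt t r := by
    intro ψ pt ptt ht htt t r hr
    have e : (fun s => deriv (fun s' => ψ s' r) s) = fun s => pt s r :=
      funext fun s => (ht r hr s).deriv
    rw [e]
    exact (htt r hr t).deriv
  have prodD : ∀ (ψ pr prr : ℝ → ℝ → ℝ),
      (∀ t', ∀ x ∈ I, HasDerivAt (fun y => ψ t' y) (pr t' x) x) →
      (∀ t', ∀ x ∈ I, HasDerivAt (fun y => pr t' y) (prr t' x) x) →
      ∀ (t r : ℝ), r ∈ I →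
        deriv (fun x => f x * deriv (fun y => ψ t y) x) r
          = (2 * M / r ^ 2 - 2 * Q ^ 2 / r ^ 3 - 2 * Λ * r / 3) * pr t r + f r * prr t r := by
    intro ψ pr prr hd1 hd2 t r hr
    have ev : (fun x => f x * deriv (fun y => ψ t y) x) =ᶠ[nhds r]
        (fun x => f x * pr t x) := by
      filter_upwards [hIopen.mem_nhds hr] with x hx
      rw [(hd1 t x hx).deriv]
    rw [ev.deriv_eq]
    exact ((hf' r hr).mul (hd2 t r hr)).deriv
  have hWlin : ∀ t' r', W t' r' = ((3 * M + ξ) * ψ₁ t' r' + (-(Q * (lam - 2))) * ψ₂ t' r') / r' := by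
    intro t' r'; rw [hW t' r']; ring_nf
  constructor
  · -- decoupled ⇒ coupled
    intro h t r hr
    have hr0 : r ≠ 0 := hI0 r hr
    have hfr0 : f r ≠ 0 := hfne r hr
    have h1 := h 1 (Set.mem_insert 1 {2}) t r hr
    have h2 := h 2 (Set.mem_insert_of_mem 1 rfl) t r hr
    simp only [reduceIte] at h1
    simp only [if_neg (show ¬(2:ℕ) = 1 by norm_num)] at h2
    rw [ttD ψ₁ p1t p1tt h1t h1tt t r hr, prodD ψ₁ p1r p1rr h1r h1rr t r hr, hU 1 r] at h1
    rw [ttD ψ₂ p2t p2tt h2t h2tt t r hr, prodD ψ₂ p2r p2rr h2r h2rr t r hr, hU 2 r] at h2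
    constructor
    · obtain ⟨c1, c2, c3⟩ := combo_derivs I hIopen ψ₁ ψ₂ p1t p1tt p1r p1rr p2t p2tt p2r p2rr
        h1t h1tt h1r h1rr h2t h2tt h2r h2rr hI0 (4 * Q) (3 * M + ξ) Φ hΦ f
        (2 * M / r ^ 2 - 2 * Q ^ 2 / r ^ 3 - 2 * Λ * r / 3) t r hr (hf' r hr)
      rw [c1, c2, c3, hΦ t r, hW t r]
      linear_combination (norm := (field_simp; ring1)) (4 * Q / r) * h1 + ((3 * M + ξ) / r) * h2 - (ψ₂ t r / r ^ 4) * hξ2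
    · obtain ⟨c1, c2, c3⟩ := combo_derivs I hIopen ψ₁ ψ₂ p1t p1tt p1r p1rr p2t p2tt p2r p2rr
        h1t h1tt h1r h1rr h2t h2tt h2r h2rr hI0 (3 * M + ξ) (-(Q * (lam - 2))) W hWlin f
        (2 * M / r ^ 2 - 2 * Q ^ 2 / r ^ 3 - 2 * Λ * r / 3) t r hr (hf' r hr)
      rw [c1, c2, c3, hW t r, hΦ t r]
      linear_combination (norm := (field_simp; ring1)) ((3 * M + ξ) / r) * h1 - (Q * (lam - 2) / r) * h2 + (ψ₁ t r / r ^ 4) * hξ2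
  · -- coupled ⇒ decoupled
    intro h n hn t r hr
    have hr0 : r ≠ 0 := hI0 r hr
    have hfr0 : f r ≠ 0 := hfne r hr
    obtain ⟨eΦ, eW⟩ := h t r hr
    obtain ⟨c1, c2, c3⟩ := combo_derivs I hIopen ψ₁ ψ₂ p1t p1tt p1r p1rr p2t p2tt p2r p2rr
      h1t h1tt h1r h1rr h2t h2tt h2r h2rr hI0 (4 * Q) (3 * M + ξ) Φ hΦ f
      (2 * M / r ^ 2 - 2 * Q ^ 2 / r ^ 3 - 2 * Λ * r / 3) t r hr (hf' r hr)
    obtain ⟨d1, d2, d3⟩ := combo_derivs I hIopen ψ₁ ψ₂ p1t p1tt p1r p1rr p2t p2tt p2r p2rr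
      h1t h1tt h1r h1rr h2t h2tt h2r h2rr hI0 (3 * M + ξ) (-(Q * (lam - 2))) W hWlin f
      (2 * M / r ^ 2 - 2 * Q ^ 2 / r ^ 3 - 2 * Λ * r / 3) t r hr (hf' r hr)
    rw [c1, c2, c3, hΦ t r, hW t r] at eΦ
    rw [d1, d2, d3, hW t r, hΦ t r] at eW
    set X1 : ℝ := -(f r)⁻¹ * p1tt t r
      + ((2 * M / r ^ 2 - 2 * Q ^ 2 / r ^ 3 - 2 * Λ * r / 3) * p1r t r + f r * p1rr t r)
      - (lam / r ^ 2 + 4 * Q ^ 2 / r ^ 4 - (3 * M - ξ) / r ^ 3) * ψ₁ t r with hX1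
    set X2 : ℝ := -(f r)⁻¹ * p2tt t r
      + ((2 * M / r ^ 2 - 2 * Q ^ 2 / r ^ 3 - 2 * Λ * r / 3) * p2r t r + f r * p2rr t r)
      - (lam / r ^ 2 + 4 * Q ^ 2 / r ^ 4 - (3 * M + ξ) / r ^ 3) * ψ₂ t r with hX2
    have e1 : (4 * Q * X1 + (3 * M + ξ) * X2) / r = 0 := by
      rw [hX1, hX2]
      linear_combination (norm := (field_simp; ring1)) eΦ + (ψ₂ t r / r ^ 4) * hξ2
    have e2 : ((3 * M + ξ) * X1 - Q * (lam - 2) * X2) / r = 0 := by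
      rw [hX1, hX2]
      linear_combination (norm := (field_simp; ring1)) eW - (ψ₁ t r / r ^ 4) * hξ2
    have e1' : 4 * Q * X1 + (3 * M + ξ) * X2 = 0 := by
      rcases div_eq_zero_iff.mp e1 with h' | h'
      · exact h'
      · exact absurd h' hr0
    have e2' : (3 * M + ξ) * X1 - Q * (lam - 2) * X2 = 0 := by
      rcases div_eq_zero_iff.mp e2 with h' | h'
      · exact h'
      · exact absurd h' hr0
    have hR1 : X1 = 0 := by
      have h0 : (4 * Q ^ 2 * (lam - 2) + (3 * M + ξ) ^ 2) * X1 = 0 := by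
        linear_combination (Q * (lam - 2)) * e1' + (3 * M + ξ) * e2'
      exact (mul_eq_zero.mp h0).resolve_left (ne_of_gt hdet)
    have hR2 : X2 = 0 := by
      have h0 : (4 * Q ^ 2 * (lam - 2) + (3 * M + ξ) ^ 2) * X2 = 0 := by
        linear_combination (3 * M + ξ) * e1' - (4 * Q) * e2'
      exact (mul_eq_zero.mp h0).resolve_left (ne_of_gt hdet)
    rw [hX1] at hR1
    rw [hX2] at hR2
    rcases hn with hn | hn
    · subst hn
      simp only [reduceIte]
      rw [ttD ψ₁ p1t p1tt h1t h1tt t r hr, prodD ψ₁ p1r p1rr h1r h1rr t r hr, hU 1 r]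
      linear_combination hR1
    · have hn2 : n = 2 := hn
      subst hn2
      simp only [if_neg (show ¬(2:ℕ) = 1 by norm_num)]
      rw [ttD ψ₂ p2t p2tt h2t h2tt t r hr, prodD ψ₂ p2r p2rr h2r h2rr t r hr, hU 2 r]
      linear_combination hR2
end

section
/- Fix real numbers M, Q, Λ, λ, set f(r) = 1 − 2M/r + Q²/r² − Λr²/3, let I ⊆ (0,∞) be an open interval on which f ≠ 0, and let Z, A : ℝ × I → ℝ be smooth. Set Φ(t,r) = Z(t,r)/r² and W(t,r) = A(t,r)/r. Then for every (t,r) ∈ ℝ × I the following are equivalent: (a) −(r²/f(r)) ∂_t²Z + r⁴ ∂_r(f(r) r⁻² ∂_r Z) + (2 − λ) Z = 4Q A; (b) −f(r)⁻¹ ∂_t²Φ + ∂_r(f ∂_r Φ) + (2f/r) ∂_r Φ + (8M/r³ − 6Q²/r⁴ − 2Λ/3 − λ/r²) Φ = (4Q/r³) W. -/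
set_option maxHeartbeats 1000000


/-- Equivalence between the odd-sector mode equation (41) for `Z` and the
four-dimensional wave equation (42) for `Φ = Z/r²`, coupled to `W = A/r`, on the
Reissner–Nordström (A)dS background. -/
theorem stmt_6 (M Q Λ lam : ℝ)
    (f : ℝ → ℝ) (hf : ∀ r : ℝ, f r = 1 - 2 * M / r + Q ^ 2 / r ^ 2 - Λ * r ^ 2 / 3)
    (I : Set ℝ) (hIopen : IsOpen I) (hIpos : I ⊆ Set.Ioi 0)
    (hfne : ∀ r ∈ I, f r ≠ 0)
    (Z A : ℝ → ℝ → ℝ)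
    (hZ : ContDiffOn ℝ (⊤ : ℕ∞) (fun p : ℝ × ℝ => Z p.1 p.2) (Set.univ ×ˢ I))
    (hA : ContDiffOn ℝ (⊤ : ℕ∞) (fun p : ℝ × ℝ => A p.1 p.2) (Set.univ ×ˢ I))
    (Φ W : ℝ → ℝ → ℝ)
    (hΦ : ∀ t r, Φ t r = Z t r / r ^ 2)
    (hW : ∀ t r, W t r = A t r / r) :
    ∀ t : ℝ, ∀ r ∈ I,
      (-(r ^ 2 / f r) * deriv (fun s => deriv (fun s' => Z s' r) s) t
          + r ^ 4 * deriv (fun x => f x / x ^ 2 * deriv (fun y => Z t y) x) r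
          + (2 - lam) * Z t r
        = 4 * Q * A t r)
      ↔ (-(f r)⁻¹ * deriv (fun s => deriv (fun s' => Φ s' r) s) t
          + deriv (fun x => f x * deriv (fun y => Φ t y) x) r
          + (2 * f r / r) * deriv (fun y => Φ t y) r
          + (8 * M / r ^ 3 - 6 * Q ^ 2 / r ^ 4 - 2 * Λ / 3 - lam / r ^ 2) * Φ t r
        = (4 * Q / r ^ 3) * W t r) := by
  intro t r hr
  have hrpos : (0:ℝ) < r := hIpos hr
  have hr0 : r ≠ 0 := ne_of_gt hrpos
  have hfr : f r ≠ 0 := hfne r hr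
  -- smoothness of the r-slice
  have hsm : ContDiffOn ℝ (⊤ : ℕ∞) (fun y => Z t y) I := by
    have hcomp : ContDiff ℝ (⊤ : ℕ∞) (fun y : ℝ => (t, y)) := contDiff_const.prodMk contDiff_id
    exact hZ.comp hcomp.contDiffOn (fun y hy => ⟨trivial, hy⟩)
  have hd : ∀ x ∈ I, DifferentiableAt ℝ (fun y => Z t y) x := by
    intro x hx
    exact (hsm.contDiffAt (hIopen.mem_nhds hx)).differentiableAt (by simp)
  have hd1 : DifferentiableAt ℝ (fun x => deriv (fun y => Z t y) x) r := by
    have h1 : ContDiffOn ℝ 1 (deriv (fun y => Z t y)) I :=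
      hsm.deriv_of_isOpen hIopen (WithTop.coe_le_coe.mpr le_top)
    exact (h1.contDiffAt (hIopen.mem_nhds hr)).differentiableAt one_ne_zero
  -- derivative of f
  have hfderiv : HasDerivAt f (2*M/r^2 - 2*Q^2/r^3 - 2*Λ*r/3) r := by
    have h1 : HasDerivAt (fun x : ℝ => 1 - 2*M/x + Q^2/x^2 - Λ*x^2/3)
        (0 - 2*M * (-(r^2)⁻¹) + Q^2 * (-(↑2 * r^(2-1)) / (r^2)^2) - Λ * (↑2 * r^(2-1)) / 3) r := by
      exact ((((hasDerivAt_const r (1:ℝ)).sub ((hasDerivAt_inv hr0).const_mul (2*M))).add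
        (((hasDerivAt_pow 2 r).inv (pow_ne_zero 2 hr0)).const_mul (Q^2))).sub
        (((hasDerivAt_pow 2 r).const_mul Λ).div_const 3))
    have h2 : (fun x : ℝ => 1 - 2*M/x + Q^2/x^2 - Λ*x^2/3) = f := by
      funext x; rw [hf x]
    rw [h2] at h1
    convert h1 using 1
    push_cast
    field_simp
    ring
  have hfd : deriv f r = 2*M/r^2 - 2*Q^2/r^3 - 2*Λ*r/3 := hfderiv.deriv
  -- shorthand
  set z := Z t r with hz
  set z1 := deriv (fun y => Z t y) r with hz1
  set z2 := deriv (fun x => deriv (fun y => Z t y) x) r with hz2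
  set ztt := deriv (fun s => deriv (fun s' => Z s' r) s) t with hztt
  -- time derivatives of Φ
  have E1 : deriv (fun s => deriv (fun s' => Φ s' r) s) t = ztt / r ^ 2 := by
    have h1 : (fun s => deriv (fun s' => Φ s' r) s)
        = fun s => deriv (fun s' => Z s' r) s / r ^ 2 := by
      funext s
      have h2 : (fun s' => Φ s' r) = fun s' => Z s' r / r ^ 2 := funext fun s' => hΦ s' r
      rw [h2, deriv_div_const]
    rw [h1, deriv_div_const]
  -- radial derivative of Φ on I
  have D1 : ∀ x ∈ I, deriv (fun y => Φ t y) x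
      = deriv (fun y => Z t y) x / x ^ 2 - 2 * Z t x / x ^ 3 := by
    intro x hx
    have hx0 : x ≠ 0 := ne_of_gt (hIpos hx)
    have h2 : (fun y => Φ t y) = fun y => Z t y / y ^ 2 := funext fun y => hΦ t y
    have h3 : HasDerivAt (fun y => Z t y / y ^ 2)
        ((deriv (fun y => Z t y) x * x ^ 2 - Z t x * (↑2 * x ^ (2-1))) / (x ^ 2) ^ 2) x :=
      (hd x hx).hasDerivAt.div (hasDerivAt_pow 2 x) (pow_ne_zero 2 hx0)
    rw [h2, h3.deriv]
    push_cast
    field_simp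
  have E2 : deriv (fun y => Φ t y) r = z1 / r ^ 2 - 2 * z / r ^ 3 := D1 r hr
  -- radial second-order term, Φ side
  have H3 : HasDerivAt (fun x => f x * deriv (fun y => Φ t y) x)
      ((2*M/r^2 - 2*Q^2/r^3 - 2*Λ*r/3) * (z1 / r ^ 2 - 2 * z / r ^ 3)
        + f r * ((z2 * r ^ 2 - z1 * (↑2 * r ^ (2-1))) / (r ^ 2) ^ 2
          - ((2 * z1) * r ^ 3 - (2 * Z t r) * (↑3 * r ^ (3-1))) / (r ^ 3) ^ 2)) r := by
    have hinner : HasDerivAt (fun x => deriv (fun y => Z t y) x / x ^ 2 - 2 * Z t x / x ^ 3)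
        ((z2 * r ^ 2 - z1 * (↑2 * r ^ (2-1))) / (r ^ 2) ^ 2
          - ((2 * z1) * r ^ 3 - (2 * Z t r) * (↑3 * r ^ (3-1))) / (r ^ 3) ^ 2) r := by
      exact (hd1.hasDerivAt.div (hasDerivAt_pow 2 r) (pow_ne_zero 2 hr0)).sub
        (((hd r hr).hasDerivAt.const_mul 2).div (hasDerivAt_pow 3 r) (pow_ne_zero 3 hr0))
    have h4 : HasDerivAt (fun x => f x * (deriv (fun y => Z t y) x / x ^ 2 - 2 * Z t x / x ^ 3))
        ((2*M/r^2 - 2*Q^2/r^3 - 2*Λ*r/3) * (z1 / r ^ 2 - 2 * z / r ^ 3)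
          + f r * ((z2 * r ^ 2 - z1 * (↑2 * r ^ (2-1))) / (r ^ 2) ^ 2
            - ((2 * z1) * r ^ 3 - (2 * Z t r) * (↑3 * r ^ (3-1))) / (r ^ 3) ^ 2)) r :=
      hfderiv.mul hinner
    apply h4.congr_of_eventuallyEq
    filter_upwards [hIopen.mem_nhds hr] with x hx
    rw [D1 x hx]
  -- radial second-order term, Z side
  have H4 : HasDerivAt (fun x => f x / x ^ 2 * deriv (fun y => Z t y) x)
      (((2*M/r^2 - 2*Q^2/r^3 - 2*Λ*r/3) * r ^ 2 - f r * (↑2 * r ^ (2-1))) / (r ^ 2) ^ 2 * z1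
        + f r / r ^ 2 * z2) r :=
    (hfderiv.div (hasDerivAt_pow 2 r) (pow_ne_zero 2 hr0)).mul hd1.hasDerivAt
  rw [E1, E2, H3.deriv, H4.deriv, hΦ t r, hW t r]
  -- reduce to an algebraic identity
  rw [← sub_eq_zero, ← sub_eq_zero (a := -(f r)⁻¹ * (ztt / r ^ 2) + _ + _ + _)]
  have key : (-(f r)⁻¹ * (ztt / r ^ 2)
      + ((2*M/r^2 - 2*Q^2/r^3 - 2*Λ*r/3) * (z1 / r ^ 2 - 2 * z / r ^ 3)
        + f r * ((z2 * r ^ 2 - z1 * (↑2 * r ^ (2-1))) / (r ^ 2) ^ 2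
          - ((2 * z1) * r ^ 3 - (2 * Z t r) * (↑3 * r ^ (3-1))) / (r ^ 3) ^ 2))
      + (2 * f r / r) * (z1 / r ^ 2 - 2 * z / r ^ 3)
      + (8 * M / r ^ 3 - 6 * Q ^ 2 / r ^ 4 - 2 * Λ / 3 - lam / r ^ 2) * (Z t r / r ^ 2)
      - (4 * Q / r ^ 3) * (A t r / r))
      = (-(r ^ 2 / f r) * ztt
        + r ^ 4 * (((2*M/r^2 - 2*Q^2/r^3 - 2*Λ*r/3) * r ^ 2 - f r * (↑2 * r ^ (2-1))) / (r ^ 2) ^ 2 * z1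
          + f r / r ^ 2 * z2)
        + (2 - lam) * z - 4 * Q * A t r) / r ^ 4 := by
    have hPval : f r = (3*r^2 - 6*M*r + 3*Q^2 - Λ*r^4)/(3*r^2) := by
      rw [hf r]; field_simp; ring
    have hPne : (3*r^2 - 6*M*r + 3*Q^2 - Λ*r^4) ≠ 0 := by
      intro h
      exact hfne r hr (by rw [hPval, h, zero_div])
    rw [hPval]
    push_cast
    field_simp
    ring
  rw [key, div_eq_zero_iff]
  exact (or_iff_left (pow_ne_zero 4 hr0)).symm
end

section
/- For all real numbers M, Q, Λ and all r > 0, with f(r) = 1 − 2M/r + Q²/r² − Λr²/3 and A(r) = −Q/r, one has (d/dr)(f(r) · A'(r)) − (2/r² + 4Q²/r⁴) · A(r) = 6MQ/r⁴. -/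
/-!
Since `A = -Q/r` has `A' = Q/r²` and `A'' = -2Q/r³`, the product rule gives
`(f A')' = f' Q/r² - 2 f Q/r³`; substituting
`f' = 2M/r² - 2Q²/r³ - 2Λr/3` the cosmological terms cancel, and what remains
after subtracting `(2/r² + 4Q²/r⁴)(-Q/r)` is `6MQ/r⁴`.
-/

section Derivatives

variable {x : ℝ}

theorem hasDerivAt_const_div_pow (c : ℝ) (n : ℕ) (hx : x ≠ 0) :
    HasDerivAt (fun y => c / y ^ n) (-(n * c) / x ^ (n + 1)) x := by
  refine ((hasDerivAt_const x c).fun_div (hasDerivAt_pow n x) (pow_ne_zero n hx)).congr_deriv ?_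
  rcases n with _ | n
  · simp
  · rw [Nat.add_sub_cancel]
    field_simp
    ring

theorem hasDerivAt_neg_div (Q : ℝ) (hx : x ≠ 0) :
    HasDerivAt (fun y => -Q / y) (Q / x ^ 2) x := by
  simpa using hasDerivAt_const_div_pow (-Q) 1 hx

theorem hasDerivAt_rnAdS_lapse (M Q Λ : ℝ) (hx : x ≠ 0) :
    HasDerivAt (fun y => 1 - 2 * M / y + Q ^ 2 / y ^ 2 - Λ * y ^ 2 / 3)
      (2 * M / x ^ 2 - 2 * Q ^ 2 / x ^ 3 - 2 * Λ * x / 3) x := by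
  have hM : HasDerivAt (fun y => 2 * M / y) (-(2 * M) / x ^ 2) x := by
    simpa using hasDerivAt_const_div_pow (2 * M) 1 hx
  have hQ := hasDerivAt_const_div_pow (Q ^ 2) 2 hx
  have hΛ := ((hasDerivAt_pow 2 x).const_mul Λ).div_const 3
  refine ((((hasDerivAt_const x 1).fun_sub hM).fun_add hQ).fun_sub hΛ).congr_deriv ?_
  norm_num
  ring

end Derivatives

/-- `A_KN = -Q/r` is a particular solution of the inhomogeneous `ℓ = 1` odd-sector
equation `(f A')' − (2/r² + 4Q²/r⁴) A = 6MQ/r⁴` on the Reissner–Nordström (A)dS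
background. -/
theorem stmt_9 (M Q Λ : ℝ)
    (f : ℝ → ℝ) (hf : ∀ r : ℝ, f r = 1 - 2 * M / r + Q ^ 2 / r ^ 2 - Λ * r ^ 2 / 3)
    (A : ℝ → ℝ) (hA : ∀ r : ℝ, A r = -Q / r) :
    ∀ r : ℝ, 0 < r →
      deriv (fun x => f x * deriv A x) r - (2 / r ^ 2 + 4 * Q ^ 2 / r ^ 4) * A r
        = 6 * M * Q / r ^ 4 := by
  intro r hr
  have hf' : HasDerivAt f (2 * M / r ^ 2 - 2 * Q ^ 2 / r ^ 3 - 2 * Λ * r / 3) r := by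
    rw [funext hf]
    exact hasDerivAt_rnAdS_lapse M Q Λ hr.ne'
  have hfA' : (fun y => f y * deriv A y) =ᶠ[nhds r] fun y => f y * (Q / y ^ 2) := by
    filter_upwards [eventually_ne_nhds hr.ne'] with y hy
    rw [funext hA, (hasDerivAt_neg_div Q hy).deriv]
  rw [((hf'.fun_mul (hasDerivAt_const_div_pow Q 2 hr.ne')).congr_of_eventuallyEq hfA').deriv,
    hf, hA]
  field_simp
  ring
end

section
/- Let M ≠ 0, Q ≠ 0, Λ be real numbers, f(r) = 1 − 2M/r + Q²/r² − Λr²/3, and let I ⊆ (0,∞) be a nonempty open interval on which f ≠ 0. Suppose A₁, A₂ : ℝ × I → ℝ are smooth and both satisfy the homogeneous equation −f(r)⁻¹ ∂_t²A + ∂_r(f ∂_r A) − (2/r² + 4Q²/r⁴) A = 0 on ℝ × I, and suppose there is a constant c ∈ ℝ such that A₁(t,r) − A₂(t,r) = c·Q/r for all (t,r) ∈ ℝ × I. Then c = 0 and A₁ = A₂. -/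
/-- Well-definedness of the angular momentum parameters: if two solutions of the
homogeneous `ℓ = 1` odd-sector equation differ by `c·Q/r`, then `c = 0` and they
coincide, since `Q/r` does not solve the homogeneous equation when `MQ ≠ 0`. -/
theorem stmt_10 (M Q Λ : ℝ) (hM : M ≠ 0) (hQ : Q ≠ 0)
    (f : ℝ → ℝ) (hf : ∀ r : ℝ, f r = 1 - 2 * M / r + Q ^ 2 / r ^ 2 - Λ * r ^ 2 / 3)
    (I : Set ℝ) (hIopen : IsOpen I) (hIne : I.Nonempty) (hIpos : I ⊆ Set.Ioi 0)
    (hfne : ∀ r ∈ I, f r ≠ 0)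
    (A₁ A₂ : ℝ → ℝ → ℝ)
    (hA₁ : ContDiffOn ℝ (⊤ : ℕ∞) (fun p : ℝ × ℝ => A₁ p.1 p.2) (Set.univ ×ˢ I))
    (hA₂ : ContDiffOn ℝ (⊤ : ℕ∞) (fun p : ℝ × ℝ => A₂ p.1 p.2) (Set.univ ×ˢ I))
    (heq₁ : ∀ t : ℝ, ∀ r ∈ I,
      -(f r)⁻¹ * deriv (fun s => deriv (fun s' => A₁ s' r) s) t
        + deriv (fun x => f x * deriv (fun y => A₁ t y) x) r
        - (2 / r ^ 2 + 4 * Q ^ 2 / r ^ 4) * A₁ t r = 0)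
    (heq₂ : ∀ t : ℝ, ∀ r ∈ I,
      -(f r)⁻¹ * deriv (fun s => deriv (fun s' => A₂ s' r) s) t
        + deriv (fun x => f x * deriv (fun y => A₂ t y) x) r
        - (2 / r ^ 2 + 4 * Q ^ 2 / r ^ 4) * A₂ t r = 0)
    (c : ℝ) (hc : ∀ t : ℝ, ∀ r ∈ I, A₁ t r - A₂ t r = c * Q / r) :
    c = 0 ∧ ∀ t : ℝ, ∀ r ∈ I, A₁ t r = A₂ t r := by
  obtain ⟨r, hrI⟩ := hIne
  have hr0 : (0:ℝ) < r := hIpos hrI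
  have hr : r ≠ 0 := ne_of_gt hr0
  set t : ℝ := 0 with ht
  -- smoothness of the radial slice of A₂
  have hA₂r : ContDiffOn ℝ (⊤ : ℕ∞) (fun y => A₂ t y) I := by
    have : (fun y => A₂ t y) = (fun p : ℝ × ℝ => A₂ p.1 p.2) ∘ (fun y => (t, y)) := rfl
    rw [this]
    exact hA₂.comp ((contDiff_const.prodMk contDiff_id).contDiffOn)
      (fun y hy => ⟨Set.mem_univ _, hy⟩)
  have hdA₂ : ContDiffOn ℝ (⊤ : ℕ∞) (deriv (fun y => A₂ t y)) I :=
    hA₂r.deriv_of_isOpen hIopen (by simp)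
  have hdiffA₂ : ∀ x ∈ I, DifferentiableAt ℝ (fun y => A₂ t y) x := fun x hx =>
    (hA₂r.differentiableOn (by simp)).differentiableAt (hIopen.mem_nhds hx)
  have hdiffdA₂ : DifferentiableAt ℝ (deriv (fun y => A₂ t y)) r :=
    (hdA₂.differentiableOn (by simp)).differentiableAt (hIopen.mem_nhds hrI)
  -- differentiability of f at points of I
  have hfun : f = fun x : ℝ => 1 - 2 * M / x + Q ^ 2 / x ^ 2 - Λ * x ^ 2 / 3 := funext hf
  have hfd : DifferentiableAt ℝ f r := by
    rw [hfun]
    fun_prop (disch := first | exact hr | exact pow_ne_zero _ hr | norm_num)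
  -- Step A: time derivatives coincide
  have hT : ∀ r' ∈ I, deriv (fun s => deriv (fun s' => A₁ s' r') s) t
      = deriv (fun s => deriv (fun s' => A₂ s' r') s) t := by
    intro r' hr'
    have h1 : ∀ s : ℝ, deriv (fun s' => A₁ s' r') s = deriv (fun s' => A₂ s' r') s := by
      intro s
      have : (fun s' => A₁ s' r') = fun s' => A₂ s' r' + c * Q / r' := by
        funext s'
        have := hc s' r' hr'
        linarith
      rw [this, deriv_add_const]
    rw [funext h1]
  -- Step B: inner radial derivative relation on I
  have hderA : ∀ x ∈ I, deriv (fun y => A₁ t y) x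
      = deriv (fun y => A₂ t y) x + c * Q * (-(x ^ 2)⁻¹) := by
    intro x hx
    have hx0 : x ≠ 0 := ne_of_gt (hIpos hx)
    have hev : (fun y => A₁ t y) =ᶠ[nhds x] (fun y => A₂ t y + c * Q * y⁻¹) := by
      filter_upwards [hIopen.mem_nhds hx] with y hy
      have := hc t y hy
      rw [div_eq_mul_inv] at this
      linarith
    have hinv : HasDerivAt (fun y : ℝ => c * Q * y⁻¹) (c * Q * (-(x ^ 2)⁻¹)) x :=
      (hasDerivAt_inv hx0).const_mul (c * Q)
    rw [hev.deriv_eq, deriv_fun_add (hdiffA₂ x hx) hinv.differentiableAt, hinv.deriv]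
  -- the correction term and its derivative
  set ψ : ℝ → ℝ := fun x => c * Q * Λ / 3 - c * Q * (x⁻¹) ^ 2 + 2 * M * c * Q * (x⁻¹) ^ 3
      - c * Q ^ 3 * (x⁻¹) ^ 4 with hψ
  have hψd : HasDerivAt ψ
      (0 - c * Q * ((2:ℕ) * (r⁻¹) ^ 1 * (-(r ^ 2)⁻¹))
        + 2 * M * c * Q * ((3:ℕ) * (r⁻¹) ^ 2 * (-(r ^ 2)⁻¹))
        - c * Q ^ 3 * ((4:ℕ) * (r⁻¹) ^ 3 * (-(r ^ 2)⁻¹))) r := by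
    have hinv := hasDerivAt_inv hr
    exact (((hasDerivAt_const r (c * Q * Λ / 3)).sub
      ((hinv.pow 2).const_mul (c * Q))).add
      ((hinv.pow 3).const_mul (2 * M * c * Q))).sub
      ((hinv.pow 4).const_mul (c * Q ^ 3))
  -- Step C: everything about the radial flux term
  have hev2 : (fun x => f x * deriv (fun y => A₁ t y) x)
      =ᶠ[nhds r] (fun x => f x * deriv (fun y => A₂ t y) x + ψ x) := by
    filter_upwards [hIopen.mem_nhds hrI] with x hx
    have hx0 : x ≠ 0 := ne_of_gt (hIpos hx)
    rw [hderA x hx, hf x, hψ]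
    field_simp
    ring
  have hF₂diff : DifferentiableAt ℝ (fun x => f x * deriv (fun y => A₂ t y) x) r :=
    hfd.mul hdiffdA₂
  have hderiv_split : deriv (fun x => f x * deriv (fun y => A₁ t y) x) r
      = deriv (fun x => f x * deriv (fun y => A₂ t y) x) r
        + (0 - c * Q * ((2:ℕ) * (r⁻¹) ^ 1 * (-(r ^ 2)⁻¹))
          + 2 * M * c * Q * ((3:ℕ) * (r⁻¹) ^ 2 * (-(r ^ 2)⁻¹))
          - c * Q ^ 3 * ((4:ℕ) * (r⁻¹) ^ 3 * (-(r ^ 2)⁻¹))) := by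
    rw [hev2.deriv_eq, deriv_fun_add hF₂diff hψd.differentiableAt, hψd.deriv]
  -- subtract the two equations
  have h₁ := heq₁ t r hrI
  have h₂ := heq₂ t r hrI
  rw [hT r hrI, hderiv_split] at h₁
  have hAc := hc t r hrI
  have hkey : (0 - c * Q * ((2:ℕ) * (r⁻¹) ^ 1 * (-(r ^ 2)⁻¹))
      + 2 * M * c * Q * ((3:ℕ) * (r⁻¹) ^ 2 * (-(r ^ 2)⁻¹))
      - c * Q ^ 3 * ((4:ℕ) * (r⁻¹) ^ 3 * (-(r ^ 2)⁻¹)))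
      - (2 / r ^ 2 + 4 * Q ^ 2 / r ^ 4) * (c * Q / r) = 0 := by
    have : (2 / r ^ 2 + 4 * Q ^ 2 / r ^ 4) * A₁ t r
        - (2 / r ^ 2 + 4 * Q ^ 2 / r ^ 4) * A₂ t r
        = (2 / r ^ 2 + 4 * Q ^ 2 / r ^ 4) * (c * Q / r) := by
      rw [← mul_sub, hAc]
    linarith
  have hc0 : c = 0 := by
    have h6 : c * (M * Q) * (-6 / r ^ 4) = 0 := by
      rw [← hkey]
      push_cast
      field_simp [show r ≠ 0 from hr]
      ring
    rcases mul_eq_zero.mp h6 with h | h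
    · rcases mul_eq_zero.mp h with h | h
      · exact h
      · exact absurd h (mul_ne_zero hM hQ)
    · refine absurd h ?_
      have : (0:ℝ) < 6 / r ^ 4 := by positivity
      intro hcontra
      rw [neg_div] at hcontra
      linarith [neg_eq_zero.mp hcontra ▸ this]
  refine ⟨hc0, fun t' r' hr' => ?_⟩
  have := hc t' r' hr'
  rw [hc0] at this
  simpa using sub_eq_zero.mp (by simpa using this)
end

section
/- Let 0 < r_i < r_h, set q = r_i r_h, M = (r_i + r_h)/2, f(r) = (r − r_i)(r − r_h)/r² (equivalently f(r) = 1 − 2M/r + q/r²), and U(r) = 2/r² + 4q/r⁴. Suppose A : (r_h, ∞) → ℝ is differentiable, the function r ↦ f(r)A'(r) is differentiable with (d/dr)(f(r)A'(r)) = U(r) A(r) for all r > r_h, and suppose A(r) → α and f(r)A'(r) → 0 as r → r_h⁺, where α > 0. Then A(r) → ∞ as r → ∞; in particular A is unbounded on (r_h, ∞). -/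
/-!
Write `B = f A'` for the flux, so that the equation reads `B' = U A`. Then
`(A B)' = f A'² + U A² ≥ 0`, and `A B → α · 0 = 0` at the horizon, so `A B ≥ 0`. Hence
`(A²)' = 2 A B / f ≥ 0` and `A² ≥ α²`; since `A` is continuous, never vanishes and starts
out positive, `A ≥ α`. Now `B ≥ 0` is strictly increasing, and `f ≤ 1` gives
`A' = B / f ≥ B(r₁) > 0` beyond any `r₁`, so `A` grows at least linearly.
-/

open Set Filter Topology

theorem MonotoneOn.le_of_tendsto_nhdsGT {g : ℝ → ℝ} {a L x : ℝ} (hg : MonotoneOn g (Ioi a))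
    (hlim : Tendsto g (𝓝[>] a) (𝓝 L)) (hx : a < x) : L ≤ g x :=
  le_of_tendsto hlim <| by
    filter_upwards [Ioo_mem_nhdsGT hx] with s hs
    exact hg hs.1 hx hs.2.le

theorem pos_of_tendsto_nhdsGT_of_ne_zero {g : ℝ → ℝ} {a L x : ℝ} (hg : ContinuousOn g (Ioi a))
    (hg0 : ∀ y ∈ Ioi a, g y ≠ 0) (hlim : Tendsto g (𝓝[>] a) (𝓝 L)) (hL : 0 < L) (hx : a < x) :
    0 < g x := by
  by_contra! hgx
  obtain ⟨s, ⟨has, hsx⟩, hgs⟩ : ∃ s ∈ Ioo a x, 0 < g s :=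
    (Filter.Eventually.and (Ioo_mem_nhdsGT hx) (hlim.eventually (lt_mem_nhds hL))).exists
  obtain ⟨z, hz, hgz⟩ := intermediate_value_Icc' hsx.le
    (hg.mono fun y hy => has.trans_le hy.1) ⟨hgx, hgs.le⟩
  exact hg0 z (has.trans_le hz.1) hgz

theorem monotoneOn_Ioi_of_hasDerivAt_nonneg {g g' : ℝ → ℝ} {a : ℝ}
    (hg : ∀ x ∈ Ioi a, HasDerivAt g (g' x) x) (hg' : ∀ x ∈ Ioi a, 0 ≤ g' x) :
    MonotoneOn g (Ioi a) :=
  monotoneOn_of_hasDerivWithinAt_nonneg (convex_Ioi a)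
    (fun x hx => (hg x hx).continuousAt.continuousWithinAt)
    (fun x hx => (hg x (interior_subset hx)).hasDerivWithinAt)
    (fun x hx => hg' x (interior_subset hx))

theorem strictMonoOn_Ioi_of_hasDerivAt_pos {g g' : ℝ → ℝ} {a : ℝ}
    (hg : ∀ x ∈ Ioi a, HasDerivAt g (g' x) x) (hg' : ∀ x ∈ Ioi a, 0 < g' x) :
    StrictMonoOn g (Ioi a) :=
  strictMonoOn_of_hasDerivWithinAt_pos (convex_Ioi a)
    (fun x hx => (hg x hx).continuousAt.continuousWithinAt)
    (fun x hx => (hg x (interior_subset hx)).hasDerivWithinAt)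
    (fun x hx => hg' x (interior_subset hx))

theorem tendsto_atTop_of_hasDerivAt_ge {g g' : ℝ → ℝ} {a c : ℝ} (hc : 0 < c)
    (hg : ∀ x ∈ Ioi a, HasDerivAt g (g' x) x) (hg' : ∀ x ∈ Ioi a, c ≤ g' x) :
    Tendsto g atTop atTop := by
  have hmono : MonotoneOn (fun x => g x - c * x) (Ioi a) :=
    monotoneOn_Ioi_of_hasDerivAt_nonneg
      (fun x hx => (hg x hx).sub ((hasDerivAt_id x).const_mul c))
      (fun x hx => by simpa using hg' x hx)
  have hlower : ∀ᶠ x in atTop, g (a + 1) - c * (a + 1) ≤ g x - c * x := by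
    filter_upwards [eventually_ge_atTop (a + 1)] with x hx
    exact hmono (by simp) (by simp; linarith) hx
  simpa using tendsto_atTop_add_left_of_le' atTop _ hlower
    (tendsto_id.const_mul_atTop hc)

section FluxEquation

variable {a α : ℝ} {f U A A' : ℝ → ℝ}

theorem monotoneOn_mul_flux (hf : ∀ r ∈ Ioi a, 0 ≤ f r) (hU : ∀ r ∈ Ioi a, 0 ≤ U r)
    (hA : ∀ r ∈ Ioi a, HasDerivAt A (A' r) r)
    (hB : ∀ r ∈ Ioi a, HasDerivAt (fun x => f x * A' x) (U r * A r) r) :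
    MonotoneOn (fun x => A x * (f x * A' x)) (Ioi a) :=
  monotoneOn_Ioi_of_hasDerivAt_nonneg (fun r hr => (hA r hr).mul (hB r hr)) fun r hr => by
    have hsum : A' r * (f r * A' r) + A r * (U r * A r) = f r * A' r ^ 2 + U r * A r ^ 2 := by
      ring
    rw [hsum]
    exact add_nonneg (mul_nonneg (hf r hr) (sq_nonneg _)) (mul_nonneg (hU r hr) (sq_nonneg _))

theorem mul_flux_nonneg (hf : ∀ r ∈ Ioi a, 0 ≤ f r) (hU : ∀ r ∈ Ioi a, 0 ≤ U r)
    (hA : ∀ r ∈ Ioi a, HasDerivAt A (A' r) r)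
    (hB : ∀ r ∈ Ioi a, HasDerivAt (fun x => f x * A' x) (U r * A r) r)
    (hlimA : Tendsto A (𝓝[>] a) (𝓝 α))
    (hlimB : Tendsto (fun x => f x * A' x) (𝓝[>] a) (𝓝 0)) {x : ℝ} (hx : a < x) :
    0 ≤ A x * (f x * A' x) := by
  simpa using (monotoneOn_mul_flux hf hU hA hB).le_of_tendsto_nhdsGT (hlimA.mul hlimB) hx

theorem mul_self_le_mul_self_of_regular (hf : ∀ r ∈ Ioi a, 0 < f r)
    (hU : ∀ r ∈ Ioi a, 0 ≤ U r) (hA : ∀ r ∈ Ioi a, HasDerivAt A (A' r) r)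
    (hB : ∀ r ∈ Ioi a, HasDerivAt (fun x => f x * A' x) (U r * A r) r)
    (hlimA : Tendsto A (𝓝[>] a) (𝓝 α))
    (hlimB : Tendsto (fun x => f x * A' x) (𝓝[>] a) (𝓝 0)) {x : ℝ} (hx : a < x) :
    α * α ≤ A x * A x := by
  have hf' : ∀ r ∈ Ioi a, 0 ≤ f r := fun r hr => (hf r hr).le
  refine MonotoneOn.le_of_tendsto_nhdsGT (g := fun y => A y * A y) ?_ (hlimA.mul hlimA) hx
  refine monotoneOn_Ioi_of_hasDerivAt_nonneg (fun r hr => (hA r hr).mul (hA r hr)) fun r hr => ?_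
  have hAA' : 0 ≤ A r * A' r := by
    refine nonneg_of_mul_nonneg_right ?_ (hf r hr)
    simpa only [mul_left_comm] using mul_flux_nonneg hf' hU hA hB hlimA hlimB hr
  linarith

theorem le_of_regular (hf : ∀ r ∈ Ioi a, 0 < f r)
    (hU : ∀ r ∈ Ioi a, 0 ≤ U r) (hA : ∀ r ∈ Ioi a, HasDerivAt A (A' r) r)
    (hB : ∀ r ∈ Ioi a, HasDerivAt (fun x => f x * A' x) (U r * A r) r) (hα : 0 < α)
    (hlimA : Tendsto A (𝓝[>] a) (𝓝 α))
    (hlimB : Tendsto (fun x => f x * A' x) (𝓝[>] a) (𝓝 0)) {x : ℝ} (hx : a < x) :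
    α ≤ A x := by
  have hsq : ∀ y ∈ Ioi a, α * α ≤ A y * A y := fun y hy =>
    mul_self_le_mul_self_of_regular hf hU hA hB hlimA hlimB hy
  have hpos : 0 < A x := by
    refine pos_of_tendsto_nhdsGT_of_ne_zero
      (fun y hy => (hA y hy).continuousAt.continuousWithinAt) (fun y hy hAy => ?_) hlimA hα hx
    nlinarith [hsq y hy]
  nlinarith [hsq x hx]

theorem strictMonoOn_flux_of_regular (hf : ∀ r ∈ Ioi a, 0 < f r)
    (hU : ∀ r ∈ Ioi a, 0 < U r) (hA : ∀ r ∈ Ioi a, HasDerivAt A (A' r) r)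
    (hB : ∀ r ∈ Ioi a, HasDerivAt (fun x => f x * A' x) (U r * A r) r) (hα : 0 < α)
    (hlimA : Tendsto A (𝓝[>] a) (𝓝 α))
    (hlimB : Tendsto (fun x => f x * A' x) (𝓝[>] a) (𝓝 0)) :
    StrictMonoOn (fun x => f x * A' x) (Ioi a) :=
  strictMonoOn_Ioi_of_hasDerivAt_pos hB fun r hr => mul_pos (hU r hr)
    (hα.trans_le (le_of_regular hf (fun r hr => (hU r hr).le) hA hB hα hlimA hlimB hr))

theorem tendsto_atTop_of_regular (hf : ∀ r ∈ Ioi a, 0 < f r) (hf₁ : ∀ r ∈ Ioi a, f r ≤ 1)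
    (hU : ∀ r ∈ Ioi a, 0 < U r) (hA : ∀ r ∈ Ioi a, HasDerivAt A (A' r) r)
    (hB : ∀ r ∈ Ioi a, HasDerivAt (fun x => f x * A' x) (U r * A r) r) (hα : 0 < α)
    (hlimA : Tendsto A (𝓝[>] a) (𝓝 α))
    (hlimB : Tendsto (fun x => f x * A' x) (𝓝[>] a) (𝓝 0)) :
    Tendsto A atTop atTop := by
  set B := fun x => f x * A' x
  have hBmono : StrictMonoOn B (Ioi a) :=
    strictMonoOn_flux_of_regular hf hU hA hB hα hlimA hlimB
  have hB₀ : 0 ≤ B (a + 1) :=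
    hBmono.monotoneOn.le_of_tendsto_nhdsGT hlimB (by linarith)
  have hB₁ : 0 < B (a + 2) :=
    hB₀.trans_lt (hBmono (by simp) (by simp) (by linarith))
  refine tendsto_atTop_of_hasDerivAt_ge (a := a + 2) hB₁
    (fun r hr => hA r (by simp only [mem_Ioi] at hr ⊢; linarith)) fun r hr => ?_
  have har : a < r := by simp only [mem_Ioi] at hr; linarith
  have hBr : B (a + 2) ≤ B r := hBmono.monotoneOn (by simp) har hr.le
  have hA'r : 0 ≤ A' r := nonneg_of_mul_nonneg_right (hB₁.le.trans hBr) (hf r har)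
  exact hBr.trans (mul_le_of_le_one_left hA'r (hf₁ r har))

end FluxEquation

theorem stmt_13_general (r_i r_h : ℝ) (h0 : 0 < r_i) (hih : r_i < r_h)
    (q : ℝ) (hq : q = r_i * r_h)
    (f U : ℝ → ℝ)
    (hf : ∀ r : ℝ, f r = (r - r_i) * (r - r_h) / r ^ 2)
    (hU : ∀ r : ℝ, U r = 2 / r ^ 2 + 4 * q / r ^ 4)
    (A A' : ℝ → ℝ)
    (hA : ∀ r ∈ Set.Ioi r_h, HasDerivAt A (A' r) r)
    (hfA : ∀ r ∈ Set.Ioi r_h, HasDerivAt (fun x => f x * A' x) (U r * A r) r)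
    (α : ℝ) (hα : 0 < α)
    (hlimA : Filter.Tendsto A (nhdsWithin r_h (Set.Ioi r_h)) (nhds α))
    (hlimfA : Filter.Tendsto (fun r => f r * A' r) (nhdsWithin r_h (Set.Ioi r_h)) (nhds 0)) :
    Filter.Tendsto A Filter.atTop Filter.atTop ∧ ¬ BddAbove (A '' Set.Ioi r_h) := by
  have hf_pos : ∀ r ∈ Ioi r_h, 0 < f r := fun r (hr : r_h < r) => by
    rw [hf]
    exact div_pos (mul_pos (by linarith) (by linarith)) (by nlinarith)
  have hf_le_one : ∀ r ∈ Ioi r_h, f r ≤ 1 := fun r (hr : r_h < r) => by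
    rw [hf, div_le_one (by nlinarith)]
    nlinarith
  have hU_pos : ∀ r ∈ Ioi r_h, 0 < U r := fun r (hr : r_h < r) => by
    have : 0 < r := by linarith
    have : 0 < r_h := by linarith
    rw [hU, hq]
    positivity
  have htend := tendsto_atTop_of_regular hf_pos hf_le_one hU_pos hA hfA hα hlimA hlimfA
  refine ⟨htend, fun ⟨m, hm⟩ => ?_⟩
  obtain ⟨r, hmr, hr⟩ := ((htend.eventually_gt_atTop m).and (eventually_gt_atTop r_h)).exists
  exact (hm ⟨r, hr, rfl⟩).not_gt hmr

/-- Stationary solutions of the homogeneous `ℓ = 1` odd-sector equation on an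
asymptotically flat Reissner–Nordström background which are regular at the event
horizon (finite limit `α > 0` of `A` and vanishing limit of `fA'` at `r_h`) diverge
as `r → ∞`; in particular they are unbounded on the outer static region. -/
theorem stmt_13 (r_i r_h : ℝ) (h0 : 0 < r_i) (hih : r_i < r_h)
    (q M : ℝ) (hq : q = r_i * r_h) (hM : M = (r_i + r_h) / 2)
    (f U : ℝ → ℝ)
    (hf : ∀ r : ℝ, f r = (r - r_i) * (r - r_h) / r ^ 2)
    (hU : ∀ r : ℝ, U r = 2 / r ^ 2 + 4 * q / r ^ 4)
    (A A' : ℝ → ℝ)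
    (hA : ∀ r ∈ Set.Ioi r_h, HasDerivAt A (A' r) r)
    (hfA : ∀ r ∈ Set.Ioi r_h, HasDerivAt (fun x => f x * A' x) (U r * A r) r)
    (α : ℝ) (hα : 0 < α)
    (hlimA : Filter.Tendsto A (nhdsWithin r_h (Set.Ioi r_h)) (nhds α))
    (hlimfA : Filter.Tendsto (fun r => f r * A' r) (nhdsWithin r_h (Set.Ioi r_h)) (nhds 0)) :
    Filter.Tendsto A Filter.atTop Filter.atTop ∧ ¬ BddAbove (A '' Set.Ioi r_h) :=
  stmt_13_general r_i r_h h0 hih q hq f U hf hU A A' hA hfA α hα hlimA hlimfA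
end
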